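/- arXiv:0803.3565 — 6 statements merged into one kernel-verified Lean document; each statement's English description precedes it below -/
import Mathlib

section
/- Let ω ∈ (0, π/2) and let ζ ∈ ℂ with ζ ≠ 0, Re ζ < 0 and |arg ζ| ≤ π/2 + ω. Then for every G = (G⁽ⁿ⁾)_{n≥0} with ‖G‖_C < ∞ one has Σ_{n=0}^∞ (Cⁿ/n!) ∫_{(ℝ^d)ⁿ} |G⁽ⁿ⁾(x)| / |m n + κ⁻ Eₙ^{a⁻}(x) + ζ| dx ≤ (1/(|ζ| cos ω)) ‖G‖_C. (Sector resolvent bound ‖(L₀ − ζ)⁻¹‖ ≤ M_ω/|ζ| with M_ω = 1/cos ω, part of Proposition 4.2 showing L₀ ∈ 𝓗(ω,0).) -/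
open MeasureTheory ENNReal Real

/-- The pair interaction energy `Eₙ^a(x) = Σ_{i≠j} a(xᵢ - xⱼ)` (equal to `0` for `n ≤ 1`). -/
def pairEnergy (d : ℕ) (a : (Fin d → ℝ) → ℝ) (n : ℕ) (x : Fin n → (Fin d → ℝ)) : ℝ :=
  ∑ i : Fin n, ∑ j : Fin n, if i ≠ j then a (x i - x j) else 0

/-- The norm of the Banach space `𝓛_C = L¹(Γ₀, C^{|η|}dλ(η))`. -/
noncomputable def normLC (d : ℕ) (C : ℝ) (G : (n : ℕ) → (Fin n → (Fin d → ℝ)) → ℝ) : ℝ≥0∞ :=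
  ∑' n : ℕ, ENNReal.ofReal (C ^ n / n.factorial) *
    ∫⁻ x : Fin n → (Fin d → ℝ), ENNReal.ofReal |G n x|

/-!
The potential `m n + κ⁻ Eₙ^{a⁻}` is real-valued, so the denominator `|V + ζ|` is bounded below by
`|Im ζ| = |ζ| sin |arg ζ|`. For `Re ζ < 0` we have `π/2 < |arg ζ| ≤ π/2 + ω`, hence
`sin |arg ζ| = cos (|arg ζ| - π/2) ≥ cos ω`, and the bound follows termwise in the series for `‖·‖_C`.
-/

namespace Complex

theorem pi_div_two_lt_abs_arg_of_re_neg {z : ℂ} (hre : z.re < 0) : π / 2 < |z.arg| :=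
  not_le.mp fun h => (abs_arg_le_pi_div_two_iff.mp h).not_gt hre

theorem abs_im_eq_norm_mul_sin_abs_arg (z : ℂ) : |z.im| = ‖z‖ * Real.sin |z.arg| := by
  rw [← norm_mul_sin_arg z, abs_mul, abs_norm, abs_sin_eq_sin_abs_of_abs_le_pi (abs_arg_le_pi z)]

theorem norm_mul_cos_le_abs_im {z : ℂ} {ω : ℝ} (hre : z.re < 0) (hω : ω ≤ π)
    (harg : |z.arg| ≤ π / 2 + ω) : ‖z‖ * Real.cos ω ≤ |z.im| := by
  have hπ2 := pi_div_two_lt_abs_arg_of_re_neg hre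
  rw [abs_im_eq_norm_mul_sin_abs_arg, ← Real.cos_sub_pi_div_two]
  gcongr
  exact Real.cos_le_cos_of_nonneg_of_le_pi (by linarith) hω (by linarith)

theorem norm_mul_cos_le_norm_ofReal_add {z : ℂ} {ω : ℝ} (hre : z.re < 0) (hω : ω ≤ π)
    (harg : |z.arg| ≤ π / 2 + ω) (t : ℝ) : ‖z‖ * Real.cos ω ≤ ‖(t : ℂ) + z‖ :=
  calc ‖z‖ * Real.cos ω ≤ |z.im| := norm_mul_cos_le_abs_im hre hω harg
    _ = |((t : ℂ) + z).im| := by simp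
    _ ≤ ‖(t : ℂ) + z‖ := abs_im_le_norm _

end Complex

theorem lintegral_ofReal_abs_div_le {α : Type*} [MeasurableSpace α] (μ : Measure α)
    {f g : α → ℝ} {K : ℝ} (hK : 0 < K) (hg : ∀ x, K ≤ g x) :
    ∫⁻ x, ENNReal.ofReal (|f x| / g x) ∂μ ≤ (ENNReal.ofReal K)⁻¹ * ∫⁻ x, ENNReal.ofReal |f x| ∂μ := by
  rw [← lintegral_const_mul' _ _ (by simpa using hK)]
  refine lintegral_mono fun x => ?_
  calc ENNReal.ofReal (|f x| / g x) ≤ ENNReal.ofReal (|f x| / K) := by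
        gcongr
        exact hg x
    _ = (ENNReal.ofReal K)⁻¹ * ENNReal.ofReal |f x| := by
        rw [ENNReal.ofReal_div_of_pos hK, div_eq_mul_inv, mul_comm]

theorem tsum_lintegral_ofReal_abs_div_le_normLC (d : ℕ) (C : ℝ)
    (G g : (n : ℕ) → (Fin n → (Fin d → ℝ)) → ℝ) {K : ℝ} (hK : 0 < K) (hg : ∀ n x, K ≤ g n x) :
    ∑' n : ℕ, ENNReal.ofReal (C ^ n / n.factorial) *
        ∫⁻ x : Fin n → (Fin d → ℝ), ENNReal.ofReal (|G n x| / g n x)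
      ≤ (ENNReal.ofReal K)⁻¹ * normLC d C G :=
  calc _ ≤ ∑' n : ℕ, ENNReal.ofReal (C ^ n / n.factorial) *
          ((ENNReal.ofReal K)⁻¹ * ∫⁻ x : Fin n → (Fin d → ℝ), ENNReal.ofReal |G n x|) :=
        ENNReal.tsum_le_tsum fun n =>
          mul_le_mul_right (lintegral_ofReal_abs_div_le _ hK (hg n)) _
    _ = (ENNReal.ofReal K)⁻¹ * normLC d C G := by
        simp only [normLC, ← ENNReal.tsum_mul_left, mul_left_comm]

theorem stmt1_general (d : ℕ)
    (aminus : (Fin d → ℝ) → ℝ)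
    (m κm C : ℝ)
    (ω : ℝ) (hωpi : ω < Real.pi / 2)
    (ζ : ℂ) (hζre : ζ.re < 0) (hζarg : |ζ.arg| ≤ Real.pi / 2 + ω)
    (G : (n : ℕ) → (Fin n → (Fin d → ℝ)) → ℝ) :
    ∑' n : ℕ, ENNReal.ofReal (C ^ n / n.factorial) *
        ∫⁻ x : Fin n → (Fin d → ℝ),
          ENNReal.ofReal
            (|G n x| / ‖((m * n + κm * pairEnergy d aminus n x : ℝ) : ℂ) + ζ‖)
      ≤ (ENNReal.ofReal (‖ζ‖ * Real.cos ω))⁻¹ * normLC d C G := by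
  have hω : 0 < ω := by linarith [Complex.pi_div_two_lt_abs_arg_of_re_neg hζre]
  have hζ : 0 < ‖ζ‖ := norm_pos_iff.mpr fun h => by simp [h] at hζre
  have hcos : 0 < Real.cos ω := Real.cos_pos_of_mem_Ioo ⟨by linarith [Real.pi_pos], hωpi⟩
  exact tsum_lintegral_ofReal_abs_div_le_normLC d C G _ (mul_pos hζ hcos) fun n x =>
    Complex.norm_mul_cos_le_norm_ofReal_add hζre (by linarith [Real.pi_pos]) hζarg _

/-- Sector resolvent bound `‖(L₀ - ζ)⁻¹‖ ≤ (1/cos ω)/|ζ|` for `ζ` in the sector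
`|arg ζ| ≤ π/2 + ω`, `Re ζ < 0` (part of Proposition 4.2, showing `L₀ ∈ 𝓗(ω,0)`). -/
theorem stmt1 (d : ℕ) (hd : 1 ≤ d)
    (aminus aplus : (Fin d → ℝ) → ℝ)
    (ham_nonneg : ∀ x, 0 ≤ aminus x) (ham_even : ∀ x, aminus (-x) = aminus x)
    (ham_meas : Measurable aminus) (ham_int : Integrable aminus)
    (ham_norm : ∫ x, aminus x = 1)
    (hap_nonneg : ∀ x, 0 ≤ aplus x) (hap_even : ∀ x, aplus (-x) = aplus x)
    (hap_meas : Measurable aplus) (hap_int : Integrable aplus)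
    (hap_norm : ∫ x, aplus x = 1)
    (m κm κp C : ℝ) (hm : 0 < m) (hκm : 0 < κm) (hκp : 0 < κp) (hC : 0 < C)
    (ω : ℝ) (hω0 : 0 < ω) (hωpi : ω < Real.pi / 2)
    (ζ : ℂ) (hζ : ζ ≠ 0) (hζre : ζ.re < 0) (hζarg : |ζ.arg| ≤ Real.pi / 2 + ω)
    (G : (n : ℕ) → (Fin n → (Fin d → ℝ)) → ℝ) (hGmeas : ∀ n, Measurable (G n))
    (hG : normLC d C G < ⊤) :
    ∑' n : ℕ, ENNReal.ofReal (C ^ n / n.factorial) *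
        ∫⁻ x : Fin n → (Fin d → ℝ),
          ENNReal.ofReal
            (|G n x| / ‖((m * n + κm * pairEnergy d aminus n x : ℝ) : ℂ) + ζ‖)
      ≤ (ENNReal.ofReal (‖ζ‖ * Real.cos ω))⁻¹ * normLC d C G :=
  stmt1_general d aminus m κm C ω hωpi ζ hζre hζarg G
end

section
/- For every sequence G = (G⁽ⁿ⁾)_{n≥0} with ‖L₀G‖_C < ∞ one has ‖L₁G‖_C ≤ (κ⁻ C / m) ‖L₀G‖_C. In particular, for any δ > 0, if C < δ m / κ⁻ then ‖L₁G‖_C ≤ a ‖L₀G‖_C with a = κ⁻C/m < δ. (Lemma 4.3: relative bound of the off-diagonal competition part L₁ with respect to the diagonal part L₀.) -/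
open MeasureTheory ENNReal

/-- The diagonal operator `(L₀G)⁽ⁿ⁾(x) = -(mn + κ⁻Eₙ^{a⁻}(x))G⁽ⁿ⁾(x)`. -/
def L0 (d : ℕ) (m κm : ℝ) (aminus : (Fin d → ℝ) → ℝ)
    (G : (n : ℕ) → (Fin n → (Fin d → ℝ)) → ℝ) :
    (n : ℕ) → (Fin n → (Fin d → ℝ)) → ℝ :=
  fun n x => -(m * n + κm * pairEnergy d aminus n x) * G n x

/-- The off-diagonal competition part
`(L₁G)⁽ⁿ⁾(x₁,…,xₙ) = κ⁻ Σ_j Σ_{i≠j} a⁻(xᵢ-xⱼ) G⁽ⁿ⁻¹⁾(x₁,…,x̂ⱼ,…,xₙ)` for `n ≥ 2`,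
and `0` for `n ≤ 1`. -/
def L1 (d : ℕ) (κm : ℝ) (aminus : (Fin d → ℝ) → ℝ)
    (G : (n : ℕ) → (Fin n → (Fin d → ℝ)) → ℝ) :
    (n : ℕ) → (Fin n → (Fin d → ℝ)) → ℝ
  | 0 => fun _ => 0
  | 1 => fun _ => 0
  | (k + 2) => fun x =>
      κm * ∑ j : Fin (k + 2), ∑ i : Fin (k + 2),
        if i ≠ j then aminus (x i - x j) * G (k + 1) (x ∘ j.succAbove) else 0

/-!
Since `a⁻ ≥ 0`, the diagonal weight satisfies `mn + κ⁻Eₙ ≥ mn`, so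
`m n ‖G⁽ⁿ⁾‖₁ ≤ ‖(L₀G)⁽ⁿ⁾‖₁`. In the `(i, j)` term of `(L₁G)⁽ⁿ⁺¹⁾` the variable `xⱼ` occurs only
in `a⁻(xᵢ - xⱼ)`; integrating it out by translation invariance (`∫ a⁻ = 1`) leaves `‖G⁽ⁿ⁾‖₁`,
and there are `(n + 1) n` such terms. Hence the `(n + 1)`-st summand of `‖L₁G‖_C` is at most
`Cⁿ⁺¹/(n+1)! · κ⁻ (n + 1) n ‖G⁽ⁿ⁾‖₁ ≤ (κ⁻C/m) · Cⁿ/n! ‖(L₀G)⁽ⁿ⁾‖₁`.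
-/

open Finset

section

variable {E : Type*} [MeasurableSpace E]

lemma lintegral_pi_mul_comp_succAbove (μ : Measure E) [SigmaFinite μ] {n : ℕ}
    {f : E → E → ℝ≥0∞} (hf : Measurable (Function.uncurry f))
    {g : (Fin n → E) → ℝ≥0∞} (hg : Measurable g) (j : Fin (n + 1)) (l : Fin n) :
    ∫⁻ x, f (x (j.succAbove l)) (x j) * g (x ∘ j.succAbove) ∂Measure.pi (fun _ => μ)
      = ∫⁻ y, (∫⁻ t, f (y l) t ∂μ) * g y ∂Measure.pi (fun _ => μ) := by
  let F : E × (Fin n → E) → ℝ≥0∞ := fun p => f (p.2 l) p.1 * g p.2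
  have hF : Measurable F :=
    (hf.comp ((measurable_pi_apply l).comp measurable_snd |>.prodMk measurable_fst)).mul
      (hg.comp measurable_snd)
  calc ∫⁻ x, f (x (j.succAbove l)) (x j) * g (x ∘ j.succAbove) ∂Measure.pi (fun _ => μ)
      = ∫⁻ x, F (MeasurableEquiv.piFinSuccAbove (fun _ => E) j x) ∂Measure.pi (fun _ => μ) := rfl
    _ = ∫⁻ p, F p ∂μ.prod (Measure.pi fun _ => μ) :=
      (measurePreserving_piFinSuccAbove (fun _ => μ) j).lintegral_comp hF
    _ = ∫⁻ y, ∫⁻ t, f (y l) t * g y ∂μ ∂Measure.pi (fun _ => μ) := lintegral_prod_symm' F hF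
    _ = ∫⁻ y, (∫⁻ t, f (y l) t ∂μ) * g y ∂Measure.pi (fun _ => μ) := by
      refine lintegral_congr fun y => lintegral_mul_const _ ?_
      exact hf.comp (measurable_const.prodMk measurable_id)

variable [AddGroup E] [MeasurableAdd E] [MeasurableNeg E] {μ : Measure E}
  [μ.IsAddLeftInvariant] [μ.IsNegInvariant]

lemma lintegral_ofReal_sub_left {a : E → ℝ} (ha : Integrable a μ) (ha0 : 0 ≤ᵐ[μ] a) (c : E) :
    ∫⁻ t, ENNReal.ofReal (a (c - t)) ∂μ = ENNReal.ofReal (∫ t, a t ∂μ) := by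
  rw [lintegral_sub_left_eq_self (fun t => ENNReal.ofReal (a t)) c,
    ofReal_integral_eq_lintegral_ofReal ha ha0]

lemma lintegral_pi_ofReal_sub_mul_comp_succAbove [MeasurableSub₂ E] [SigmaFinite μ] {n : ℕ}
    {a : E → ℝ} (ha_meas : Measurable a) (ha : Integrable a μ) (ha0 : 0 ≤ᵐ[μ] a)
    {g : (Fin n → E) → ℝ≥0∞} (hg : Measurable g) {i j : Fin (n + 1)} (hij : i ≠ j) :
    ∫⁻ x, ENNReal.ofReal (a (x i - x j)) * g (x ∘ j.succAbove) ∂Measure.pi (fun _ => μ)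
      = ENNReal.ofReal (∫ t, a t ∂μ) * ∫⁻ y, g y ∂Measure.pi (fun _ => μ) := by
  obtain ⟨l, rfl⟩ := Fin.exists_succAbove_eq hij
  rw [lintegral_pi_mul_comp_succAbove μ (f := fun c t => ENNReal.ofReal (a (c - t)))
    (by fun_prop) hg j l]
  simp only [lintegral_ofReal_sub_left ha ha0]
  exact lintegral_const_mul _ hg

end

section

variable {d : ℕ} {a : (Fin d → ℝ) → ℝ} {κ : ℝ} (G : (n : ℕ) → (Fin n → (Fin d → ℝ)) → ℝ)

lemma pairEnergy_nonneg (ha0 : ∀ y, 0 ≤ a y) (n : ℕ) (x : Fin n → Fin d → ℝ) :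
    0 ≤ pairEnergy d a n x :=
  sum_nonneg fun i _ => sum_nonneg fun j _ => by split_ifs <;> simp [ha0]

lemma mul_lintegral_enorm_le_lintegral_enorm_L0 (m : ℝ) (hκ : 0 ≤ κ) (ha0 : ∀ y, 0 ≤ a y)
    (n : ℕ) :
    ENNReal.ofReal (m * n) * ∫⁻ x, ‖G n x‖ₑ ≤ ∫⁻ x, ‖L0 d m κ a G n x‖ₑ := by
  refine (lintegral_const_mul_le _ _).trans (lintegral_mono fun x => ?_)
  have hE := mul_nonneg hκ (pairEnergy_nonneg ha0 n x)
  rw [Real.enorm_eq_ofReal_abs, Real.enorm_eq_ofReal_abs, ← ofReal_mul' (abs_nonneg _), L0,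
    abs_mul, abs_neg]
  gcongr
  exact (le_add_of_nonneg_right hE).trans (le_abs_self _)

lemma enorm_L1_le (ha0 : ∀ y, 0 ≤ a y) (n : ℕ) (x : Fin (n + 2) → Fin d → ℝ) :
    ‖L1 d κ a G (n + 2) x‖ₑ ≤ ‖κ‖ₑ * ∑ j, ∑ i ∈ univ.erase j,
      ENNReal.ofReal (a (x i - x j)) * ‖G (n + 1) (x ∘ j.succAbove)‖ₑ := by
  simp only [L1, enorm_mul, ← filter_ne', sum_filter]
  gcongr
  refine (enorm_sum_le _ _).trans (sum_le_sum fun j _ => (enorm_sum_le _ _).trans ?_)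
  gcongr with i
  split_ifs
  · rw [enorm_mul, Real.enorm_of_nonneg (ha0 _)]
  · simp

lemma lintegral_enorm_L1_le {n : ℕ} (ha_meas : Measurable a) (ha : Integrable a)
    (ha0 : ∀ y, 0 ≤ a y) (hG : Measurable (G (n + 1))) :
    ∫⁻ x, ‖L1 d κ a G (n + 2) x‖ₑ
      ≤ ‖κ‖ₑ * ((n + 2) * (n + 1) : ℕ) * ENNReal.ofReal (∫ t, a t) * ∫⁻ y, ‖G (n + 1) y‖ₑ := by
  have hterm : ∀ i j : Fin (n + 2), i ≠ j →
      ∫⁻ x, ENNReal.ofReal (a (x i - x j)) * ‖G (n + 1) (x ∘ j.succAbove)‖ₑ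
        = ENNReal.ofReal (∫ t, a t) * ∫⁻ y, ‖G (n + 1) y‖ₑ := fun i j hij => by
    simp only [volume_pi]
    exact lintegral_pi_ofReal_sub_mul_comp_succAbove ha_meas ha (ae_of_all _ ha0) hG.enorm hij
  have hmeas : ∀ j i : Fin (n + 2), Measurable fun x : Fin (n + 2) → Fin d → ℝ =>
      ENNReal.ofReal (a (x i - x j)) * ‖G (n + 1) (x ∘ j.succAbove)‖ₑ := fun j i => by
    fun_prop
  calc ∫⁻ x, ‖L1 d κ a G (n + 2) x‖ₑ
      ≤ ∫⁻ x, ‖κ‖ₑ * ∑ j : Fin (n + 2), ∑ i ∈ univ.erase j,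
          ENNReal.ofReal (a (x i - x j)) * ‖G (n + 1) (x ∘ j.succAbove)‖ₑ :=
        lintegral_mono (enorm_L1_le G ha0 n)
    _ = ‖κ‖ₑ * ∑ j : Fin (n + 2), ∑ i ∈ univ.erase j,
          ENNReal.ofReal (∫ t, a t) * ∫⁻ y, ‖G (n + 1) y‖ₑ := by
        rw [lintegral_const_mul' _ _ enorm_ne_top, lintegral_finsetSum _ fun j _ =>
          Finset.measurable_sum _ fun i _ => hmeas j i]
        congr 1
        refine sum_congr rfl fun j _ => ?_
        rw [lintegral_finsetSum _ fun i _ => hmeas j i]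
        exact sum_congr rfl fun i hi => hterm i j (ne_of_mem_erase hi)
    _ = _ := by
        simp only [sum_const, card_erase_of_mem (mem_univ _), card_univ, Fintype.card_fin,
          nsmul_eq_mul]
        push_cast
        ring

lemma ofReal_mul_lintegral_enorm_L1_succ_le {m C : ℝ} (hm : 0 < m) (hκ : 0 ≤ κ) (hC : 0 ≤ C)
    (ha_meas : Measurable a) (ha : Integrable a) (ha0 : ∀ y, 0 ≤ a y) (ha1 : ∫ t, a t = 1)
    (hG : ∀ n, Measurable (G n)) (n : ℕ) :
    ENNReal.ofReal (C ^ (n + 1) / (n + 1).factorial) * ∫⁻ x, ‖L1 d κ a G (n + 1) x‖ₑ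
      ≤ ENNReal.ofReal (κ * C / m) *
        (ENNReal.ofReal (C ^ n / n.factorial) * ∫⁻ x, ‖L0 d m κ a G n x‖ₑ) := by
  obtain _ | k := n
  · simp [L1]
  have hcoeff : ENNReal.ofReal (C ^ (k + 2) / (k + 2).factorial) * ‖κ‖ₑ * ((k + 2) * (k + 1) : ℕ)
      = ENNReal.ofReal (κ * C / m) * ENNReal.ofReal (C ^ (k + 1) / (k + 1).factorial) *
        ENNReal.ofReal (m * (k + 1 : ℕ)) := by
    rw [Real.enorm_of_nonneg hκ, ← ofReal_natCast, ← ofReal_mul (by positivity),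
      ← ofReal_mul (by positivity), ← ofReal_mul (by positivity), ← ofReal_mul (by positivity)]
    congr 1
    rw [Nat.factorial_succ (k + 1)]
    push_cast
    field_simp
    ring
  calc ENNReal.ofReal (C ^ (k + 2) / (k + 2).factorial) * ∫⁻ x, ‖L1 d κ a G (k + 2) x‖ₑ
      ≤ ENNReal.ofReal (C ^ (k + 2) / (k + 2).factorial) *
          (‖κ‖ₑ * ((k + 2) * (k + 1) : ℕ) * ENNReal.ofReal (∫ t, a t) *
            ∫⁻ y, ‖G (k + 1) y‖ₑ) := by
        gcongr
        exact lintegral_enorm_L1_le G ha_meas ha ha0 (hG _)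
    _ = ENNReal.ofReal (κ * C / m) * (ENNReal.ofReal (C ^ (k + 1) / (k + 1).factorial) *
          (ENNReal.ofReal (m * (k + 1 : ℕ)) * ∫⁻ y, ‖G (k + 1) y‖ₑ)) := by
        rw [ha1, ofReal_one, mul_one, ← mul_assoc, ← mul_assoc, hcoeff]
        ring
    _ ≤ _ := by
        gcongr
        exact mul_lintegral_enorm_le_lintegral_enorm_L0 G m hκ ha0 (k + 1)

end

theorem stmt2_general (d : ℕ)
    (aminus : (Fin d → ℝ) → ℝ)
    (ham_nonneg : ∀ x, 0 ≤ aminus x)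
    (ham_meas : Measurable aminus) (ham_int : Integrable aminus)
    (ham_norm : ∫ x, aminus x = 1)
    (m κm C : ℝ) (hm : 0 < m) (hκm : 0 < κm) (hC : 0 < C)
    (G : (n : ℕ) → (Fin n → (Fin d → ℝ)) → ℝ) (hGmeas : ∀ n, Measurable (G n)) :
    normLC d C (L1 d κm aminus G)
        ≤ ENNReal.ofReal (κm * C / m) * normLC d C (L0 d m κm aminus G) ∧
      ∀ δ : ℝ, 0 < δ → C < δ * m / κm → κm * C / m < δ := by
  refine ⟨?_, fun δ _ hCδ => ?_⟩
  · have hL1_zero : ∫⁻ x, ‖L1 d κm aminus G 0 x‖ₑ = 0 := by simp [L1]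
    simp only [normLC, ← Real.enorm_eq_ofReal_abs]
    rw [tsum_eq_zero_add' ENNReal.summable, hL1_zero, mul_zero, zero_add,
      ← ENNReal.tsum_mul_left]
    exact ENNReal.tsum_le_tsum fun n => ofReal_mul_lintegral_enorm_L1_succ_le G hm hκm.le hC.le
      ham_meas ham_int ham_nonneg ham_norm hGmeas n
  · rw [lt_div_iff₀ hκm] at hCδ
    rw [div_lt_iff₀ hm]
    linarith

/-- Lemma 4.3: the relative bound `‖L₁G‖_C ≤ (κ⁻C/m)‖L₀G‖_C`; in particular, for any `δ > 0`,
if `C < δm/κ⁻` then `‖L₁G‖_C ≤ a‖L₀G‖_C` with `a = κ⁻C/m < δ`. -/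
theorem stmt2 (d : ℕ) (hd : 1 ≤ d)
    (aminus aplus : (Fin d → ℝ) → ℝ)
    (ham_nonneg : ∀ x, 0 ≤ aminus x) (ham_even : ∀ x, aminus (-x) = aminus x)
    (ham_meas : Measurable aminus) (ham_int : Integrable aminus)
    (ham_norm : ∫ x, aminus x = 1)
    (hap_nonneg : ∀ x, 0 ≤ aplus x) (hap_even : ∀ x, aplus (-x) = aplus x)
    (hap_meas : Measurable aplus) (hap_int : Integrable aplus)
    (hap_norm : ∫ x, aplus x = 1)
    (m κm κp C : ℝ) (hm : 0 < m) (hκm : 0 < κm) (hκp : 0 < κp) (hC : 0 < C)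
    (G : (n : ℕ) → (Fin n → (Fin d → ℝ)) → ℝ) (hGmeas : ∀ n, Measurable (G n))
    (hG : normLC d C (L0 d m κm aminus G) < ⊤) :
    normLC d C (L1 d κm aminus G)
        ≤ ENNReal.ofReal (κm * C / m) * normLC d C (L0 d m κm aminus G) ∧
      ∀ δ : ℝ, 0 < δ → C < δ * m / κm → κm * C / m < δ :=
  stmt2_general d aminus ham_nonneg ham_meas ham_int ham_norm m κm C hm hκm hC G hGmeas
end

section
/- Let δ > 0 and assume that κ⁺ Eₙ^{a⁺}(x) ≤ δ C (m n + κ⁻ Eₙ^{a⁻}(x)) for every n ≥ 1 and every x ∈ (ℝ^d)ⁿ. Then for every sequence G = (G⁽ⁿ⁾)_{n≥0} with each G⁽ⁿ⁾ symmetric under permutations of its arguments and ‖L₀G‖_C < ∞, one has ‖L₃G‖_C ≤ δ ‖L₀G‖_C. (Lemma 4.5: relative bound of the birth part L₃ with respect to the diagonal part L₀.) -/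
/-!
After Fubini in the new particle `y`, `∫ |(L₃G)⁽ⁿ⁾|` is at most
`κ⁺ Σⱼ ∫ a⁺(z_{n+1} - z_j) |G⁽ⁿ⁺¹⁾(z)| dz`. Since `G⁽ⁿ⁺¹⁾` is symmetric, every row
`i ↦ Σ_{j ≠ i} a⁺(z_i - z_j)` of the pair energy has the same integral against `|G⁽ⁿ⁺¹⁾|`, so this
is `κ⁺/(n+1) ∫ E_{n+1}^{a⁺} |G⁽ⁿ⁺¹⁾|`. The hypothesis bounds it by `δC/(n+1) ∫ |(L₀G)⁽ⁿ⁺¹⁾|`,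
and `Cⁿ/n! · C/(n+1) = C^{n+1}/(n+1)!` is exactly the weight of the `(n+1)`-st term of `‖L₀G‖_C`.
-/

open MeasureTheory ENNReal

/-- The birth part `(L₃G)⁽ⁿ⁾(x₁,…,xₙ) = κ⁺ Σ_j ∫_{ℝ^d} a⁺(y-xⱼ) G⁽ⁿ⁺¹⁾(x₁,…,xₙ,y) dy`. -/
noncomputable def L3 (d : ℕ) (κp : ℝ) (aplus : (Fin d → ℝ) → ℝ)
    (G : (n : ℕ) → (Fin n → (Fin d → ℝ)) → ℝ) :
    (n : ℕ) → (Fin n → (Fin d → ℝ)) → ℝ :=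
  fun n x =>
    κp * ∑ j : Fin n, ∫ y : Fin d → ℝ, aplus (y - x j) * G (n + 1) (Fin.snoc x y)

/-- `G = (G⁽ⁿ⁾)` has components symmetric under permutations of the arguments. -/
def IsSymmSeq (d : ℕ) (G : (n : ℕ) → (Fin n → (Fin d → ℝ)) → ℝ) : Prop :=
  ∀ (n : ℕ) (σ : Equiv.Perm (Fin n)) (x : Fin n → (Fin d → ℝ)), G n (x ∘ σ) = G n x

section Pi
variable {ι E : Type*}

lemma lintegral_comp_perm [Fintype ι] [MeasureSpace E] [SigmaFinite (volume : Measure E)]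
    (σ : Equiv.Perm ι) (f : (ι → E) → ℝ≥0∞) : ∫⁻ z, f (z ∘ σ) = ∫⁻ z, f z := by
  rw [← (volume_measurePreserving_piCongrLeft (fun _ : ι => E) σ.symm).lintegral_comp_emb
    (MeasurableEquiv.measurableEmbedding _) f]
  congr! with z
  ext i
  simpa using
    (MeasurableEquiv.piCongrLeft_apply_apply (β := fun _ => E) σ.symm z (σ i)).symm

lemma piFinSuccAbove_last_symm_apply [MeasurableSpace E] {n : ℕ} (y : E) (x : Fin n → E) :
    (MeasurableEquiv.piFinSuccAbove (fun _ => E) (Fin.last n)).symm (y, x) = Fin.snoc x y := by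
  simp [MeasurableEquiv.piFinSuccAbove_symm_apply, Fin.snocEquiv]

lemma lintegral_lintegral_snoc [MeasureSpace E] [SigmaFinite (volume : Measure E)] {n : ℕ}
    {H : (Fin (n + 1) → E) → ℝ≥0∞} (hH : Measurable H) :
    ∫⁻ x : Fin n → E, ∫⁻ y, H (Fin.snoc x y) = ∫⁻ z, H z := by
  rw [← (volume_preserving_piFinSuccAbove (fun _ => E) (Fin.last n)).symm.lintegral_comp_emb
    (MeasurableEquiv.measurableEmbedding _), Measure.volume_eq_prod,
    lintegral_prod_symm (f := fun p => H ((MeasurableEquiv.piFinSuccAbove _ _).symm p))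
      (hH.comp (MeasurableEquiv.measurable _)).aemeasurable]
  simp only [piFinSuccAbove_last_symm_apply]

variable [Fintype ι] [DecidableEq ι] {w : E → E → ℝ≥0∞} {F : (ι → E) → ℝ≥0∞}

lemma measurable_sum_ne_mul [MeasurableSpace E] (hw : Measurable (Function.uncurry w))
    (hFm : Measurable F) (i : ι) :
    Measurable fun z : ι → E => (∑ j, if i ≠ j then w (z i) (z j) else 0) * F z := by
  refine (Finset.measurable_sum _ fun j _ => ?_).mul hFm
  split_ifs
  · exact hw.comp (f := fun z : ι → E => (z i, z j))
      ((measurable_pi_apply i).prodMk (measurable_pi_apply j))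
  · exact measurable_const

lemma lintegral_sum_ne_mul_eq [MeasureSpace E] [SigmaFinite (volume : Measure E)]
    (hF : ∀ (σ : Equiv.Perm ι) z, F (z ∘ σ) = F z) (i k : ι) :
    ∫⁻ z, (∑ j, if i ≠ j then w (z i) (z j) else 0) * F z =
      ∫⁻ z, (∑ j, if k ≠ j then w (z k) (z j) else 0) * F z := by
  refine (lintegral_comp_perm (Equiv.swap i k) _).symm.trans (lintegral_congr fun z => ?_)
  rw [hF]
  congr 1
  refine Fintype.sum_equiv (Equiv.swap i k) _ _ fun j => ?_
  have hk : k = Equiv.swap i k j ↔ i = j := by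
    rw [eq_comm, Equiv.swap_apply_eq_iff, Equiv.swap_apply_right, eq_comm]
  simp [hk]

lemma lintegral_sum_sum_ne_mul_eq [MeasureSpace E] [SigmaFinite (volume : Measure E)]
    (hw : Measurable (Function.uncurry w)) (hFm : Measurable F)
    (hF : ∀ (σ : Equiv.Perm ι) z, F (z ∘ σ) = F z) (k : ι) :
    ∫⁻ z, (∑ i, ∑ j, if i ≠ j then w (z i) (z j) else 0) * F z =
      Fintype.card ι * ∫⁻ z, (∑ j, if k ≠ j then w (z k) (z j) else 0) * F z := by
  conv_lhs => enter [2, z]; rw [Finset.sum_mul]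
  rw [lintegral_finsetSum _ fun i _ => measurable_sum_ne_mul hw hFm i,
    Finset.sum_congr rfl fun i _ => lintegral_sum_ne_mul_eq hF i k, Finset.sum_const,
    Finset.card_univ, nsmul_eq_mul]

end Pi

section PairEnergy
variable {d : ℕ} {a : (Fin d → ℝ) → ℝ}

lemma ofReal_pairEnergy (ha : ∀ x, 0 ≤ a x) (n : ℕ) (x : Fin n → Fin d → ℝ) :
    ENNReal.ofReal (pairEnergy d a n x) =
      ∑ i, ∑ j, if i ≠ j then ENNReal.ofReal (a (x i - x j)) else 0 := by
  have hterm : ∀ i j : Fin n, 0 ≤ if i ≠ j then a (x i - x j) else 0 := fun i j => by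
    split_ifs
    exacts [ha _, le_rfl]
  rw [pairEnergy, ENNReal.ofReal_sum_of_nonneg fun i _ => Finset.sum_nonneg fun j _ => hterm i j]
  refine Finset.sum_congr rfl fun i _ => ?_
  rw [ENNReal.ofReal_sum_of_nonneg fun j _ => hterm i j]
  refine Finset.sum_congr rfl fun j _ => ?_
  split_ifs <;> simp

lemma lintegral_pairEnergy_mul_eq (ha : ∀ x, 0 ≤ a x) (ha_meas : Measurable a) {n : ℕ}
    {F : (Fin (n + 1) → Fin d → ℝ) → ℝ≥0∞} (hFm : Measurable F)
    (hF : ∀ (σ : Equiv.Perm (Fin (n + 1))) z, F (z ∘ σ) = F z) :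
    ∫⁻ z, ENNReal.ofReal (pairEnergy d a (n + 1) z) * F z =
      (n + 1) * ∑ j : Fin n, ∫⁻ z, ENNReal.ofReal (a (z (Fin.last n) - z j.castSucc)) * F z := by
  have hw : Measurable (Function.uncurry fun x y : Fin d → ℝ => ENNReal.ofReal (a (x - y))) :=
    (ha_meas.comp measurable_sub).ennreal_ofReal
  simp_rw [ofReal_pairEnergy ha]
  rw [lintegral_sum_sum_ne_mul_eq hw hFm hF (Fin.last n), Fintype.card_fin, Nat.cast_succ]
  congr 1
  rw [← lintegral_finsetSum _ fun j _ => ?_]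
  · refine lintegral_congr fun z => ?_
    simp [Fin.sum_univ_castSucc, (Fin.castSucc_lt_last _).ne', Finset.sum_mul]
  · fun_prop

end PairEnergy

section Birth
variable {d : ℕ} {κp : ℝ} {a : (Fin d → ℝ) → ℝ} {G : (n : ℕ) → (Fin n → (Fin d → ℝ)) → ℝ}

lemma ofReal_abs_L3_le (hκp : 0 ≤ κp) (ha : ∀ x, 0 ≤ a x) (n : ℕ) (x : Fin n → Fin d → ℝ) :
    ENNReal.ofReal |L3 d κp a G n x| ≤ ENNReal.ofReal κp *
      ∑ j, ∫⁻ y, ENNReal.ofReal (a (y - x j)) * ENNReal.ofReal |G (n + 1) (Fin.snoc x y)| := by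
  rw [← Real.enorm_eq_ofReal_abs, L3, enorm_mul, Real.enorm_eq_ofReal hκp]
  gcongr
  refine (enorm_sum_le _ _).trans (Finset.sum_le_sum fun j _ => ?_)
  refine (enorm_integral_le_lintegral_enorm _).trans_eq (lintegral_congr fun y => ?_)
  rw [enorm_mul, Real.enorm_eq_ofReal (ha _), Real.enorm_eq_ofReal_abs]

lemma lintegral_L3_le (hκp : 0 ≤ κp) (ha : ∀ x, 0 ≤ a x) (ha_meas : Measurable a) {n : ℕ}
    (hG : Measurable (G (n + 1))) :
    ∫⁻ x, ENNReal.ofReal |L3 d κp a G n x| ≤ ENNReal.ofReal κp *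
      ∑ j : Fin n, ∫⁻ z, ENNReal.ofReal (a (z (Fin.last n) - z j.castSucc)) *
        ENNReal.ofReal |G (n + 1) z| := by
  have hmeas : ∀ j : Fin n, Measurable fun z : Fin (n + 1) → Fin d → ℝ =>
      ENNReal.ofReal (a (z (Fin.last n) - z j.castSucc)) * ENNReal.ofReal |G (n + 1) z| :=
    fun j => by fun_prop
  calc ∫⁻ x, ENNReal.ofReal |L3 d κp a G n x|
      ≤ ∫⁻ x, ENNReal.ofReal κp * ∑ j, ∫⁻ y,
          ENNReal.ofReal (a (y - x j)) * ENNReal.ofReal |G (n + 1) (Fin.snoc x y)| :=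
        lintegral_mono (ofReal_abs_L3_le hκp ha n)
    _ = ENNReal.ofReal κp * ∑ j : Fin n, ∫⁻ z, ENNReal.ofReal (a (z (Fin.last n) - z j.castSucc)) *
        ENNReal.ofReal |G (n + 1) z| := by
      rw [lintegral_const_mul' _ _ ENNReal.ofReal_ne_top]
      congr 1
      rw [lintegral_finsetSum _ fun j _ => Measurable.lintegral_prod_right (by fun_prop)]
      refine Finset.sum_congr rfl fun j _ => ?_
      rw [← lintegral_lintegral_snoc (hmeas j)]
      simp only [Fin.snoc_last, Fin.snoc_castSucc]

end Birth

section Domination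
variable {d : ℕ} {m κm κp : ℝ} {aminus aplus : (Fin d → ℝ) → ℝ}
  {G : (n : ℕ) → (Fin n → (Fin d → ℝ)) → ℝ}

lemma lintegral_pairEnergy_mul_le_L0 {c : ℝ} (hc : 0 ≤ c) (hap : ∀ x, 0 ≤ aplus x) {N : ℕ}
    (hdom : ∀ x, κp * pairEnergy d aplus N x ≤ c * (m * N + κm * pairEnergy d aminus N x)) :
    ENNReal.ofReal κp * ∫⁻ z, ENNReal.ofReal (pairEnergy d aplus N z) * ENNReal.ofReal |G N z| ≤
      ENNReal.ofReal c * ∫⁻ z, ENNReal.ofReal |L0 d m κm aminus G N z| := by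
  rw [← lintegral_const_mul' _ _ ENNReal.ofReal_ne_top,
    ← lintegral_const_mul' _ _ ENNReal.ofReal_ne_top]
  refine lintegral_mono fun z => ?_
  have hE : 0 ≤ pairEnergy d aplus N z :=
    Finset.sum_nonneg fun i _ => Finset.sum_nonneg fun j _ => by split_ifs <;> simp [hap]
  rw [← ENNReal.ofReal_mul' (abs_nonneg _), ← ENNReal.ofReal_mul' (by positivity),
    ← ENNReal.ofReal_mul hc, L0, abs_mul, abs_neg, ← mul_assoc, ← mul_assoc]
  exact ENNReal.ofReal_le_ofReal (mul_le_mul_of_nonneg_right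
    ((hdom z).trans (mul_le_mul_of_nonneg_left (le_abs_self _) hc)) (abs_nonneg _))

end Domination

lemma ofReal_pow_div_factorial_mul_le {C δ : ℝ} (hC : 0 ≤ C) {n : ℕ} {X K : ℝ≥0∞}
    (h : (n + 1) * X ≤ ENNReal.ofReal (δ * C) * K) :
    ENNReal.ofReal (C ^ n / n.factorial) * X ≤
      ENNReal.ofReal δ * (ENNReal.ofReal (C ^ (n + 1) / (n + 1).factorial) * K) := by
  have hcoef : ENNReal.ofReal (C ^ n / n.factorial) * ENNReal.ofReal (δ * C) =
      (n + 1) * (ENNReal.ofReal δ * ENNReal.ofReal (C ^ (n + 1) / (n + 1).factorial)) := by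
    rw [← ENNReal.ofReal_mul (by positivity), ← ENNReal.ofReal_mul' (by positivity),
      ← ENNReal.ofReal_natCast, ← ENNReal.ofReal_one,
      ← ENNReal.ofReal_add (by positivity) zero_le_one, ← ENNReal.ofReal_mul (by positivity),
      Nat.factorial_succ]
    congr 1
    push_cast
    field_simp
    ring
  rw [← ENNReal.mul_le_mul_iff_right (a := (n : ℝ≥0∞) + 1) (by simp) (by simp)]
  calc (n + 1) * (ENNReal.ofReal (C ^ n / n.factorial) * X)
      = ENNReal.ofReal (C ^ n / n.factorial) * ((n + 1) * X) := by ring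
    _ ≤ ENNReal.ofReal (C ^ n / n.factorial) * (ENNReal.ofReal (δ * C) * K) := by gcongr
    _ = (n + 1) * (ENNReal.ofReal δ * (ENNReal.ofReal (C ^ (n + 1) / (n + 1).factorial) * K)) := by
      rw [← mul_assoc, hcoef]; ring

lemma normLC_le_mul_of_le_succ {d : ℕ} {C : ℝ} {F H : (n : ℕ) → (Fin n → (Fin d → ℝ)) → ℝ}
    {c : ℝ≥0∞}
    (h : ∀ n, ENNReal.ofReal (C ^ n / n.factorial) * ∫⁻ x, ENNReal.ofReal |F n x| ≤
      c * (ENNReal.ofReal (C ^ (n + 1) / (n + 1).factorial) * ∫⁻ x, ENNReal.ofReal |H (n + 1) x|)) :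
    normLC d C F ≤ c * normLC d C H :=
  calc normLC d C F
      ≤ ∑' n, c * (ENNReal.ofReal (C ^ (n + 1) / (n + 1).factorial) *
          ∫⁻ x, ENNReal.ofReal |H (n + 1) x|) := ENNReal.tsum_le_tsum h
    _ = c * ∑' n, ENNReal.ofReal (C ^ (n + 1) / (n + 1).factorial) *
          ∫⁻ x, ENNReal.ofReal |H (n + 1) x| := ENNReal.tsum_mul_left
    _ ≤ c * normLC d C H := by
      gcongr
      exact ENNReal.tsum_comp_le_tsum_of_injective Nat.succ_injective
        (fun n => ENNReal.ofReal (C ^ n / n.factorial) * ∫⁻ x, ENNReal.ofReal |H n x|)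

theorem stmt6_general (d : ℕ)
    (aminus aplus : (Fin d → ℝ) → ℝ)
    (hap_nonneg : ∀ x, 0 ≤ aplus x)
    (hap_meas : Measurable aplus)
    (m κm κp C : ℝ) (hκp : 0 < κp) (hC : 0 < C)
    (δ : ℝ) (hδ : 0 < δ)
    (hdom : ∀ (n : ℕ), 1 ≤ n → ∀ x : Fin n → (Fin d → ℝ),
      κp * pairEnergy d aplus n x ≤ δ * C * (m * n + κm * pairEnergy d aminus n x))
    (G : (n : ℕ) → (Fin n → (Fin d → ℝ)) → ℝ) (hGmeas : ∀ n, Measurable (G n))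
    (hGsymm : IsSymmSeq d G) :
    normLC d C (L3 d κp aplus G)
      ≤ ENNReal.ofReal δ * normLC d C (L0 d m κm aminus G) := by
  refine normLC_le_mul_of_le_succ fun n => ofReal_pow_div_factorial_mul_le hC.le ?_
  have hGm : Measurable fun z => ENNReal.ofReal |G (n + 1) z| := (hGmeas _).abs.ennreal_ofReal
  have hGs : ∀ (σ : Equiv.Perm (Fin (n + 1))) z,
      ENNReal.ofReal |G (n + 1) (z ∘ σ)| = ENNReal.ofReal |G (n + 1) z| := fun σ z => by
    rw [hGsymm]
  calc (n + 1) * ∫⁻ x, ENNReal.ofReal |L3 d κp aplus G n x|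
      ≤ (n + 1) * (ENNReal.ofReal κp * ∑ j : Fin n, ∫⁻ z,
          ENNReal.ofReal (aplus (z (Fin.last n) - z j.castSucc)) *
            ENNReal.ofReal |G (n + 1) z|) :=
        mul_le_mul_right (lintegral_L3_le hκp.le hap_nonneg hap_meas (hGmeas _)) _
    _ = ENNReal.ofReal κp * ∫⁻ z, ENNReal.ofReal (pairEnergy d aplus (n + 1) z) *
          ENNReal.ofReal |G (n + 1) z| := by
        rw [lintegral_pairEnergy_mul_eq hap_nonneg hap_meas hGm hGs]
        ring
    _ ≤ ENNReal.ofReal (δ * C) * ∫⁻ z, ENNReal.ofReal |L0 d m κm aminus G (n + 1) z| :=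
        lintegral_pairEnergy_mul_le_L0 (by positivity) hap_nonneg (hdom (n + 1) (by omega))

/-- Lemma 4.5: if `κ⁺Eₙ^{a⁺}(x) ≤ δC(mn + κ⁻Eₙ^{a⁻}(x))` for all `n ≥ 1` and `x`, then
`‖L₃G‖_C ≤ δ‖L₀G‖_C` for symmetric `G` with `‖L₀G‖_C < ∞`. -/
theorem stmt6 (d : ℕ) (hd : 1 ≤ d)
    (aminus aplus : (Fin d → ℝ) → ℝ)
    (ham_nonneg : ∀ x, 0 ≤ aminus x) (ham_even : ∀ x, aminus (-x) = aminus x)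
    (ham_meas : Measurable aminus) (ham_int : Integrable aminus)
    (ham_norm : ∫ x, aminus x = 1)
    (hap_nonneg : ∀ x, 0 ≤ aplus x) (hap_even : ∀ x, aplus (-x) = aplus x)
    (hap_meas : Measurable aplus) (hap_int : Integrable aplus)
    (hap_norm : ∫ x, aplus x = 1)
    (m κm κp C : ℝ) (hm : 0 < m) (hκm : 0 < κm) (hκp : 0 < κp) (hC : 0 < C)
    (δ : ℝ) (hδ : 0 < δ)
    (hdom : ∀ (n : ℕ), 1 ≤ n → ∀ x : Fin n → (Fin d → ℝ),
      κp * pairEnergy d aplus n x ≤ δ * C * (m * n + κm * pairEnergy d aminus n x))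
    (G : (n : ℕ) → (Fin n → (Fin d → ℝ)) → ℝ) (hGmeas : ∀ n, Measurable (G n))
    (hGsymm : IsSymmSeq d G)
    (hG : normLC d C (L0 d m κm aminus G) < ⊤) :
    normLC d C (L3 d κp aplus G)
      ≤ ENNReal.ofReal δ * normLC d C (L0 d m κm aminus G) :=
  stmt6_general d aminus aplus hap_nonneg hap_meas m κm κp C hκp hC δ hδ hdom G hGmeas hGsymm
end

section
/- Let 0 < κ⁺ < 1, C > 0, α > 0, β := min(α κ⁺, C), and let B ⊆ ℝ^d be such that a⁺(x − y) ≥ α for all x, y ∈ B. Fix t ≥ 0. Suppose k⁽¹⁾ : [0,t] × ℝ^d → ℝ satisfies k⁽¹⁾(s, x) ≥ C e^{(κ⁺ − 1)s} for all s ∈ [0,t] and x ∈ B, and suppose k_t⁽²⁾ : (ℝ^d)² → ℝ satisfies, for all x₁, x₂ ∈ B, k_t⁽²⁾(x₁, x₂) ≥ κ⁺ ∫₀ᵗ e^{2(κ⁺ − 1)(t − s)} ( k⁽¹⁾(s, x₂) a⁺(x₁ − x₂) + k⁽¹⁾(s, x₁) a⁺(x₂ − x₁) ) ds. Then k_t⁽²⁾(x₁,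 x₂) ≥ 2 β² t e^{2(κ⁺ − 1)t} for all x₁, x₂ ∈ B. (Base case of the clustering lower bound (3.5) for the contact model.) -/
open MeasureTheory Real

/-!
On `B` both terms of the Duhamel integrand are at least `C e^{(κ⁺-1)s} α`, and since `κ⁺ - 1 ≤ 0`
the weight satisfies `e^{2(κ⁺-1)(t-s)} e^{(κ⁺-1)s} ≥ e^{2(κ⁺-1)t}`. Hence the integrand is at least
the constant `2Cα e^{2(κ⁺-1)t}`, the integral at least `2Cα t e^{2(κ⁺-1)t}`, and `β² ≤ ακ⁺ · C`
finishes the bound.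
-/

lemma mul_sub_le_intervalIntegral_of_le {f : ℝ → ℝ} {a b c : ℝ} (hab : a ≤ b)
    (hf : IntervalIntegrable f volume a b) (hc : ∀ s ∈ Set.Icc a b, c ≤ f s) :
    c * (b - a) ≤ ∫ s in a..b, f s :=
  calc c * (b - a) = ∫ _ in a..b, c := by simp [mul_comm]
    _ ≤ ∫ s in a..b, f s := intervalIntegral.integral_mono_on hab intervalIntegrable_const hf hc

lemma sq_min_le_mul {x y : ℝ} (hx : 0 ≤ x) (hy : 0 ≤ y) : min x y ^ 2 ≤ x * y := by
  rw [sq]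
  exact mul_le_mul (min_le_left x y) (min_le_right x y) (le_min hx hy) hx

lemma two_mul_mul_le_mul_add_mul {c α u v p q : ℝ} (hc : 0 ≤ c) (hα : 0 ≤ α)
    (hu : c ≤ u) (hv : c ≤ v) (hp : α ≤ p) (hq : α ≤ q) :
    2 * (c * α) ≤ u * p + v * q := by
  have hup : c * α ≤ u * p := mul_le_mul hu hp hα (hc.trans hu)
  have hvq : c * α ≤ v * q := mul_le_mul hv hq hα (hc.trans hv)
  linarith

lemma mul_exp_two_mul_le_exp_mul {l t s A w : ℝ} (hl : l ≤ 0) (hs : 0 ≤ s) (hA : 0 ≤ A)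
    (hw : A * exp (l * s) ≤ w) :
    A * exp (2 * l * t) ≤ exp (2 * l * (t - s)) * w := by
  have hexp : exp (2 * l * t) ≤ exp (2 * l * (t - s)) * exp (l * s) := by
    rw [← exp_add, exp_le_exp]
    nlinarith
  calc A * exp (2 * l * t) ≤ A * (exp (2 * l * (t - s)) * exp (l * s)) := by gcongr
    _ = exp (2 * l * (t - s)) * (A * exp (l * s)) := by ring
    _ ≤ exp (2 * l * (t - s)) * w := by gcongr

theorem stmt12_general (d : ℕ)
    (aplus : (Fin d → ℝ) → ℝ)
    (κp C α : ℝ) (hκ0 : 0 < κp) (hκ1 : κp < 1) (hC : 0 < C) (hα : 0 < α)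
    (β : ℝ) (hβ : β = min (α * κp) C)
    (B : Set (Fin d → ℝ)) (hB : ∀ x ∈ B, ∀ y ∈ B, α ≤ aplus (x - y))
    (t : ℝ) (ht : 0 ≤ t)
    (k1 : ℝ → (Fin d → ℝ) → ℝ)
    (hk1 : ∀ s ∈ Set.Icc (0 : ℝ) t, ∀ x ∈ B, C * Real.exp ((κp - 1) * s) ≤ k1 s x)
    (hk1int : ∀ x₁ x₂ : Fin d → ℝ,
      IntervalIntegrable (fun s : ℝ => Real.exp (2 * (κp - 1) * (t - s)) *
        (k1 s x₂ * aplus (x₁ - x₂) + k1 s x₁ * aplus (x₂ - x₁))) volume 0 t)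
    (k2 : (Fin d → ℝ) → (Fin d → ℝ) → ℝ)
    (hk2 : ∀ x₁ ∈ B, ∀ x₂ ∈ B,
      κp * ∫ s in (0 : ℝ)..t, Real.exp (2 * (κp - 1) * (t - s)) *
          (k1 s x₂ * aplus (x₁ - x₂) + k1 s x₁ * aplus (x₂ - x₁))
        ≤ k2 x₁ x₂) :
    ∀ x₁ ∈ B, ∀ x₂ ∈ B,
      2 * β ^ 2 * t * Real.exp (2 * (κp - 1) * t) ≤ k2 x₁ x₂ := by
  intro x₁ hx₁ x₂ hx₂
  have hβ2 : β ^ 2 ≤ α * κp * C := hβ ▸ sq_min_le_mul (by positivity) hC.le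
  have hintegrand : ∀ s ∈ Set.Icc 0 t, 2 * (C * α) * exp (2 * (κp - 1) * t) ≤
      exp (2 * (κp - 1) * (t - s)) * (k1 s x₂ * aplus (x₁ - x₂) + k1 s x₁ * aplus (x₂ - x₁)) :=
    fun s hs => mul_exp_two_mul_le_exp_mul (by linarith) hs.1 (by positivity) <| by
      rw [mul_assoc, mul_right_comm C]
      exact two_mul_mul_le_mul_add_mul (by positivity) hα.le (hk1 s hs x₂ hx₂) (hk1 s hs x₁ hx₁)
        (hB x₁ hx₁ x₂ hx₂) (hB x₂ hx₂ x₁ hx₁)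
  have hintegral := mul_sub_le_intervalIntegral_of_le ht (hk1int x₁ x₂) hintegrand
  calc 2 * β ^ 2 * t * exp (2 * (κp - 1) * t)
      ≤ 2 * (α * κp * C) * t * exp (2 * (κp - 1) * t) := by gcongr
    _ = κp * (2 * (C * α) * exp (2 * (κp - 1) * t) * (t - 0)) := by ring
    _ ≤ κp * ∫ s in (0 : ℝ)..t, exp (2 * (κp - 1) * (t - s)) *
          (k1 s x₂ * aplus (x₁ - x₂) + k1 s x₁ * aplus (x₂ - x₁)) := by gcongr
    _ ≤ k2 x₁ x₂ := hk2 x₁ hx₁ x₂ hx₂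

/-- Base case of the clustering lower bound (3.5) for the continuous contact model
(mortality `m = 1`, branching intensity `0 < κ⁺ < 1`):
if `k⁽¹⁾(s,x) ≥ C e^{(κ⁺-1)s}` on `B` and `k_t⁽²⁾` dominates the Duhamel term, then
`k_t⁽²⁾(x₁,x₂) ≥ 2β²t e^{2(κ⁺-1)t}` on `B × B`, with `β = min(ακ⁺, C)`. -/
theorem stmt12 (d : ℕ) (hd : 1 ≤ d)
    (aplus : (Fin d → ℝ) → ℝ)
    (hap_nonneg : ∀ x, 0 ≤ aplus x) (hap_even : ∀ x, aplus (-x) = aplus x)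
    (hap_meas : Measurable aplus) (hap_int : Integrable aplus)
    (hap_norm : ∫ x, aplus x = 1)
    (κp C α : ℝ) (hκ0 : 0 < κp) (hκ1 : κp < 1) (hC : 0 < C) (hα : 0 < α)
    (β : ℝ) (hβ : β = min (α * κp) C)
    (B : Set (Fin d → ℝ)) (hB : ∀ x ∈ B, ∀ y ∈ B, α ≤ aplus (x - y))
    (t : ℝ) (ht : 0 ≤ t)
    (k1 : ℝ → (Fin d → ℝ) → ℝ)
    (hk1 : ∀ s ∈ Set.Icc (0 : ℝ) t, ∀ x ∈ B, C * Real.exp ((κp - 1) * s) ≤ k1 s x)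
    (hk1int : ∀ x₁ x₂ : Fin d → ℝ,
      IntervalIntegrable (fun s : ℝ => Real.exp (2 * (κp - 1) * (t - s)) *
        (k1 s x₂ * aplus (x₁ - x₂) + k1 s x₁ * aplus (x₂ - x₁))) volume 0 t)
    (k2 : (Fin d → ℝ) → (Fin d → ℝ) → ℝ)
    (hk2 : ∀ x₁ ∈ B, ∀ x₂ ∈ B,
      κp * ∫ s in (0 : ℝ)..t, Real.exp (2 * (κp - 1) * (t - s)) *
          (k1 s x₂ * aplus (x₁ - x₂) + k1 s x₁ * aplus (x₂ - x₁))
        ≤ k2 x₁ x₂) :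
    ∀ x₁ ∈ B, ∀ x₂ ∈ B,
      2 * β ^ 2 * t * Real.exp (2 * (κp - 1) * t) ≤ k2 x₁ x₂ :=
  stmt12_general d aplus κp C α hκ0 hκ1 hC hα β hβ B hB t ht k1 hk1 hk1int k2 hk2
end

section
/- Let 0 < κ⁺ < 1, α > 0, 0 < β ≤ α κ⁺, and let B ⊆ ℝ^d be such that a⁺(x − y) ≥ α for all x, y ∈ B. Fix an integer n ≥ 2 and t ≥ 1. Suppose k⁽ⁿ⁻¹⁾ : [0,t] × (ℝ^d)^{n−1} → ℝ satisfies k⁽ⁿ⁻¹⁾(s, y) ≥ β^{n−1} e^{(n−1)(κ⁺ − 1)s} (n−1)! for all s ∈ [0,t] and y ∈ B^{n−1}, and suppose k_t⁽ⁿ⁾ : (ℝ^d)ⁿ → ℝ satisfies, for all (x₁,…,xₙ) ∈ Bⁿ, k_t⁽ⁿ⁾(x₁,…,xₙ) ≥ κ⁺ ∫₀ᵗ e^{n(κ⁺ − 1)(t − s)} Σ_{i=1}^n k⁽ⁿ⁻¹⁾(s, (x₁,…,x̂ᵢ,…,xₙ)) Σ_{j≠i} a⁺(xᵢ − xⱼ)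 ds, where x̂ᵢ means the i-th argument is omitted. Then k_t⁽ⁿ⁾(x₁,…,xₙ) ≥ βⁿ e^{n(κ⁺ − 1)t} n! for all (x₁,…,xₙ) ∈ Bⁿ. (Induction step of the clustering lower bound (3.5) for the contact model.) -/
/-!
On `B` every interaction `a⁺(xᵢ - xⱼ)` is at least `α`, so for `n + 2` particles the inner
sum over `j ≠ i` is at least `(n + 1) α`, and the hypothesis on `k⁽ⁿ⁺¹⁾` bounds the Duhamel
integrand at time `s` below by `(n + 1) α β^{n+1} (n + 2)! e^{(n+2)(κ⁺-1)(t-s)} e^{(n+1)(κ⁺-1)s}`.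
As `κ⁺ < 1`, the product of the two exponentials dominates `e^{(n+2)(κ⁺-1)t}`, so the
integrand is bounded below uniformly in `s ∈ [0, t]` and integration gains a factor `t`.
Finally `κ⁺ t (n + 1) α ≥ κ⁺ α ≥ β` because `t ≥ 1`.
-/

open MeasureTheory Real

lemma mul_le_sum_ite_ne {m : ℕ} (i : Fin (m + 1)) {f : Fin (m + 1) → ℝ} {c : ℝ}
    (hf : ∀ j, j ≠ i → c ≤ f j) :
    m * c ≤ ∑ j, if j ≠ i then f j else 0 := by
  rw [← Finset.sum_filter, Finset.filter_ne']
  have h := Finset.card_nsmul_le_sum (Finset.univ.erase i) f c fun j hj =>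
    hf j (Finset.ne_of_mem_erase hj)
  rwa [Finset.card_erase_of_mem (Finset.mem_univ i), Finset.card_univ, Fintype.card_fin,
    add_tsub_cancel_right, nsmul_eq_mul] at h

lemma mul_le_sum_mul_sum_ite_ne {m : ℕ} {g : Fin (m + 1) → ℝ}
    {f : Fin (m + 1) → Fin (m + 1) → ℝ} {L c : ℝ} (hL : 0 ≤ L) (hc : 0 ≤ c)
    (hg : ∀ i, L ≤ g i) (hf : ∀ i j, j ≠ i → c ≤ f i j) :
    (m + 1) * (L * (m * c)) ≤ ∑ i, g i * ∑ j, if j ≠ i then f i j else 0 := by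
  simpa using Finset.card_nsmul_le_sum Finset.univ _ _ fun i _ =>
    mul_le_mul (hg i) (mul_le_sum_ite_ne i (hf i)) (by positivity) (hL.trans (hg i))

lemma exp_mul_le_exp_mul_sub_mul_exp_mul {p q a s : ℝ} (hqp : q ≤ p) (ha : a ≤ 0)
    (hs : 0 ≤ s) (t : ℝ) : exp (p * a * t) ≤ exp (p * a * (t - s)) * exp (q * a * s) := by
  rw [← exp_add]
  gcongr
  nlinarith [mul_nonneg (mul_nonneg (sub_nonneg.2 hqp) (neg_nonneg.2 ha)) hs]

theorem le_duhamel_integrand {d n : ℕ} {aplus : (Fin d → ℝ) → ℝ} {B : Set (Fin d → ℝ)}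
    {κp α β t s : ℝ} (hκ1 : κp < 1) (hα : 0 ≤ α) (hβ0 : 0 ≤ β)
    (hB : ∀ x ∈ B, ∀ y ∈ B, α ≤ aplus (x - y)) (hs : 0 ≤ s)
    {kprev : (Fin (n + 1) → (Fin d → ℝ)) → ℝ}
    (hkprev : ∀ y : Fin (n + 1) → (Fin d → ℝ), (∀ i, y i ∈ B) →
      β ^ (n + 1) * Real.exp ((n + 1) * (κp - 1) * s) * (n + 1).factorial ≤ kprev y)
    {x : Fin (n + 2) → (Fin d → ℝ)} (hx : ∀ i, x i ∈ B) :
    (n + 1) * α * (β ^ (n + 1) * Real.exp ((n + 2) * (κp - 1) * t) * (n + 2).factorial) ≤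
      Real.exp ((n + 2) * (κp - 1) * (t - s)) *
        ∑ i : Fin (n + 2), kprev (x ∘ i.succAbove) *
          ∑ j : Fin (n + 2), if j ≠ i then aplus (x i - x j) else 0 := by
  have hsum := mul_le_sum_mul_sum_ite_ne (g := fun i => kprev (x ∘ i.succAbove))
    (f := fun i j => aplus (x i - x j)) (by positivity) hα
    (fun i => hkprev _ fun j => hx (i.succAbove j)) (fun i j _ => hB _ (hx i) _ (hx j))
  have hexp := exp_mul_le_exp_mul_sub_mul_exp_mul (p := n + 2) (q := n + 1) (by linarith)
    (sub_nonpos.2 hκ1.le) hs t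
  have hfact : ((n + 2).factorial : ℝ) = (n + 2) * (n + 1).factorial := by
    rw [Nat.factorial_succ (n + 1)]
    push_cast
    ring
  simp only [Nat.cast_add, Nat.cast_one] at hsum
  rw [hfact]
  calc _ = (n + 2) * ((n + 1) * α * β ^ (n + 1) * (n + 1).factorial) *
        Real.exp ((n + 2) * (κp - 1) * t) := by ring
    _ ≤ (n + 2) * ((n + 1) * α * β ^ (n + 1) * (n + 1).factorial) *
        (Real.exp ((n + 2) * (κp - 1) * (t - s)) * Real.exp ((n + 1) * (κp - 1) * s)) := by
      gcongr
    _ = Real.exp ((n + 2) * (κp - 1) * (t - s)) * ((n + 1 + 1) * (β ^ (n + 1) *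
        Real.exp ((n + 1) * (κp - 1) * s) * (n + 1).factorial * ((n + 1) * α))) := by ring
    _ ≤ _ := by gcongr

theorem stmt13_general (d : ℕ)
    (aplus : (Fin d → ℝ) → ℝ)
    (κp α β : ℝ) (hκ0 : 0 < κp) (hκ1 : κp < 1) (hα : 0 < α)
    (hβ0 : 0 < β) (hβ : β ≤ α * κp)
    (B : Set (Fin d → ℝ)) (hB : ∀ x ∈ B, ∀ y ∈ B, α ≤ aplus (x - y))
    (n : ℕ) (t : ℝ) (ht : 1 ≤ t)
    (kprev : ℝ → (Fin (n + 1) → (Fin d → ℝ)) → ℝ)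
    (hkprev : ∀ s ∈ Set.Icc (0 : ℝ) t, ∀ y : Fin (n + 1) → (Fin d → ℝ),
      (∀ i, y i ∈ B) →
        β ^ (n + 1) * Real.exp ((n + 1) * (κp - 1) * s) * (n + 1).factorial ≤ kprev s y)
    (hint : ∀ x : Fin (n + 2) → (Fin d → ℝ),
      IntervalIntegrable (fun s : ℝ =>
        Real.exp ((n + 2) * (κp - 1) * (t - s)) *
          ∑ i : Fin (n + 2), kprev s (x ∘ i.succAbove) *
            ∑ j : Fin (n + 2), if j ≠ i then aplus (x i - x j) else 0) volume 0 t)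
    (kt : (Fin (n + 2) → (Fin d → ℝ)) → ℝ)
    (hkt : ∀ x : Fin (n + 2) → (Fin d → ℝ), (∀ i, x i ∈ B) →
      (κp * ∫ s in (0 : ℝ)..t,
          Real.exp ((n + 2) * (κp - 1) * (t - s)) *
            ∑ i : Fin (n + 2), kprev s (x ∘ i.succAbove) *
              ∑ j : Fin (n + 2), if j ≠ i then aplus (x i - x j) else 0)
        ≤ kt x) :
    ∀ x : Fin (n + 2) → (Fin d → ℝ), (∀ i, x i ∈ B) →
      β ^ (n + 2) * Real.exp ((n + 2) * (κp - 1) * t) * (n + 2).factorial ≤ kt x := by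
  intro x hx
  have hI := intervalIntegral.integral_mono_on (zero_le_one.trans ht) intervalIntegrable_const
    (hint x) fun s hs => le_duhamel_integrand hκ1 hα.le hβ0.le hB hs.1 (hkprev s hs) hx
  rw [intervalIntegral.integral_const, sub_zero, smul_eq_mul] at hI
  have hβ' : β ≤ κp * (t * ((n + 1) * α)) := by
    have : 1 ≤ t * (n + 1) := one_le_mul_of_one_le_of_one_le ht (by simp)
    nlinarith [mul_pos hα hκ0]
  refine le_trans ?_ ((mul_le_mul_of_nonneg_left hI hκ0.le).trans (hkt x hx))
  calc β ^ (n + 2) * Real.exp ((n + 2) * (κp - 1) * t) * (n + 2).factorial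
      = β * (β ^ (n + 1) * Real.exp ((n + 2) * (κp - 1) * t) * (n + 2).factorial) := by ring
    _ ≤ κp * (t * ((n + 1) * α)) *
        (β ^ (n + 1) * Real.exp ((n + 2) * (κp - 1) * t) * (n + 2).factorial) := by gcongr
    _ = _ := by ring

/-- Induction step of the clustering lower bound (3.5) for the continuous contact model
(mortality `m = 1`, branching intensity `0 < κ⁺ < 1`): here the integer `n ≥ 2` of the
informal statement is represented as `n + 2`. If
`k⁽ⁿ⁻¹⁾(s,y) ≥ β^{n-1} e^{(n-1)(κ⁺-1)s}(n-1)!` on `B^{n-1}` for `s ∈ [0,t]`, `t ≥ 1`,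
and `k_t⁽ⁿ⁾` dominates the Duhamel term, then
`k_t⁽ⁿ⁾(x) ≥ βⁿ e^{n(κ⁺-1)t} n!` on `Bⁿ`. -/
theorem stmt13 (d : ℕ) (hd : 1 ≤ d)
    (aplus : (Fin d → ℝ) → ℝ)
    (hap_nonneg : ∀ x, 0 ≤ aplus x) (hap_even : ∀ x, aplus (-x) = aplus x)
    (hap_meas : Measurable aplus) (hap_int : Integrable aplus)
    (hap_norm : ∫ x, aplus x = 1)
    (κp α β : ℝ) (hκ0 : 0 < κp) (hκ1 : κp < 1) (hα : 0 < α)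
    (hβ0 : 0 < β) (hβ : β ≤ α * κp)
    (B : Set (Fin d → ℝ)) (hB : ∀ x ∈ B, ∀ y ∈ B, α ≤ aplus (x - y))
    (n : ℕ) (t : ℝ) (ht : 1 ≤ t)
    (kprev : ℝ → (Fin (n + 1) → (Fin d → ℝ)) → ℝ)
    (hkprev : ∀ s ∈ Set.Icc (0 : ℝ) t, ∀ y : Fin (n + 1) → (Fin d → ℝ),
      (∀ i, y i ∈ B) →
        β ^ (n + 1) * Real.exp ((n + 1) * (κp - 1) * s) * (n + 1).factorial ≤ kprev s y)
    (hint : ∀ x : Fin (n + 2) → (Fin d → ℝ),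
      IntervalIntegrable (fun s : ℝ =>
        Real.exp ((n + 2) * (κp - 1) * (t - s)) *
          ∑ i : Fin (n + 2), kprev s (x ∘ i.succAbove) *
            ∑ j : Fin (n + 2), if j ≠ i then aplus (x i - x j) else 0) volume 0 t)
    (kt : (Fin (n + 2) → (Fin d → ℝ)) → ℝ)
    (hkt : ∀ x : Fin (n + 2) → (Fin d → ℝ), (∀ i, x i ∈ B) →
      (κp * ∫ s in (0 : ℝ)..t,
          Real.exp ((n + 2) * (κp - 1) * (t - s)) *
            ∑ i : Fin (n + 2), kprev s (x ∘ i.succAbove) *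
              ∑ j : Fin (n + 2), if j ≠ i then aplus (x i - x j) else 0)
        ≤ kt x) :
    ∀ x : Fin (n + 2) → (Fin d → ℝ), (∀ i, x i ∈ B) →
      β ^ (n + 2) * Real.exp ((n + 2) * (κp - 1) * t) * (n + 2).factorial ≤ kt x :=
  stmt13_general d aplus κp α β hκ0 hκ1 hα hβ0 hβ B hB n t ht kprev hkprev hint kt hkt
end

section
/- Let a⁻, a⁺ : ℝ^d → ℝ be nonnegative measurable integrable functions with ∫_{ℝ^d} a⁻(x)dx = 1, let κ⁻, κ⁺, C, m > 0, b ≥ 0, and let z > 0 be such that a⁺(x) ≥ z a⁻(x) for all x ∈ ℝ^d. For R > 0 write Λ_R := [−R, R]^d and A_R^{±} := ∫_{Λ_R} ∫_{Λ_R} a^{±}(x − y) dx dy. Suppose that for every t > 0 and every R > 0: κ⁺ A_R^{+} − κ⁻ C t A_R^{−} − m |Λ_R| − (b/(C t)) (1 − e^{−C t |Λ_R|}) ≤ 0, where |Λ_R| = (2R)^d is the Lebesgue measure of Λ_R. Then m ≥ z κ⁺. (Section 7: the accretivity of L̂ − b on 𝓛_C forces the mortality m to be large; m cannot be arbitrarily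 small.) -/
open MeasureTheory Real

/-- The cube `Λ_R = [-R, R]^d` in `ℝ^d`. -/
def cube (d : ℕ) (R : ℝ) : Set (Fin d → ℝ) :=
  Set.pi Set.univ fun _ : Fin d => Set.Icc (-R) R

/-- `A_R = ∫_{Λ_R}∫_{Λ_R} a(x-y) dx dy`. -/
noncomputable def cubeEnergy (d : ℕ) (a : (Fin d → ℝ) → ℝ) (R : ℝ) : ℝ :=
  ∫ x in cube d R, ∫ y in cube d R, a (x - y)

/-!
Divide the accretivity inequality by `|Λ_R| = (2R)^d`. Since `a⁻ ≥ 0` is integrable,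
`A_R⁻ / |Λ_R| → ∫ a⁻ = 1` as `R → ∞`: the kernel mass seen from a point of the cube is at most
`∫ a⁻`, and at least `∫_{Λ_{R₀}} a⁻` for the points of the inner cube `Λ_{R-R₀}`, whose relative
volume tends to `1`. The exponential term is bounded in `R` and `|Λ_R| → ∞` (as `d ≥ 1`), so with
`A_R⁺ ≥ z A_R⁻`, letting `R → ∞` gives `zκ⁺ - κ⁻Ct - m ≤ 0` for every `t > 0`, and `t → 0` gives `zκ⁺ ≤ m`.
-/

open Filter Topology

lemma measurableSet_cube (d : ℕ) (R : ℝ) : MeasurableSet (cube d R) :=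
  MeasurableSet.univ_pi fun _ => measurableSet_Icc

lemma isCompact_cube (d : ℕ) (R : ℝ) : IsCompact (cube d R) :=
  isCompact_univ_pi fun _ => isCompact_Icc

lemma cube_mono (d : ℕ) {R R' : ℝ} (h : R ≤ R') : cube d R ⊆ cube d R' :=
  Set.pi_mono fun _ _ => Set.Icc_subset_Icc (neg_le_neg h) h

lemma volume_real_cube (d : ℕ) {R : ℝ} (hR : 0 ≤ R) :
    volume.real (cube d R) = (2 * R) ^ d := by
  rw [cube, measureReal_def, volume_pi_pi]
  simp [Real.volume_Icc, two_mul, ENNReal.toReal_ofReal, hR]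

lemma mem_cube_of_norm_le {d : ℕ} {x : Fin d → ℝ} {R : ℝ} (h : ‖x‖ ≤ R) : x ∈ cube d R :=
  fun i _ => abs_le.mp ((norm_le_pi_norm x i).trans h)

lemma sub_mem_cube {d : ℕ} {x w : Fin d → ℝ} {R R' : ℝ} (hx : x ∈ cube d R) (hw : w ∈ cube d R') :
    x - w ∈ cube d (R + R') := fun i _ => by
  have := hx i trivial; have := hw i trivial
  simp only [Set.mem_Icc, Pi.sub_apply] at *
  constructor <;> linarith

section

variable {d : ℕ} {a : (Fin d → ℝ) → ℝ}

lemma aestronglyMeasurable_setIntegral_sub (ha : AEStronglyMeasurable a) (s : Set (Fin d → ℝ)) :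
    AEStronglyMeasurable (fun x => ∫ y in s, a (x - y)) :=
  (ha.comp_quasiMeasurePreserving
    (quasiMeasurePreserving_sub_of_right_invariant volume (volume.restrict s))).integral_prod_right'

lemma norm_setIntegral_sub_le (ha : Integrable a) (s : Set (Fin d → ℝ)) (x : Fin d → ℝ) :
    ‖∫ y in s, a (x - y)‖ ≤ ∫ u, ‖a u‖ :=
  calc ‖∫ y in s, a (x - y)‖ ≤ ∫ y in s, ‖a (x - y)‖ := norm_integral_le_integral_norm _
    _ ≤ ∫ y, ‖a (x - y)‖ :=
      setIntegral_le_integral (ha.comp_sub_left x).norm (ae_of_all _ fun _ => norm_nonneg _)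
    _ = ∫ u, ‖a u‖ := integral_sub_left_eq_self (fun u => ‖a u‖) volume x

lemma integrableOn_setIntegral_sub (ha : Integrable a) (s : Set (Fin d → ℝ))
    {t : Set (Fin d → ℝ)} (ht : volume t ≠ ⊤) :
    IntegrableOn (fun x => ∫ y in s, a (x - y)) t :=
  Measure.integrableOn_of_bounded ht (aestronglyMeasurable_setIntegral_sub ha.1 s)
    (ae_of_all _ (norm_setIntegral_sub_le ha s))

lemma cubeEnergy_le_integral_norm_mul (ha : Integrable a) {R : ℝ} (hR : 0 ≤ R) :
    cubeEnergy d a R ≤ (∫ u, ‖a u‖) * (2 * R) ^ d := by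
  rw [← volume_real_cube d hR]
  exact (le_abs_self _).trans <| norm_setIntegral_le_of_norm_le_const
    (isCompact_cube d R).measure_lt_top fun x _ => norm_setIntegral_sub_le ha _ x

lemma cubeEnergy_const_mul (c : ℝ) (a : (Fin d → ℝ) → ℝ) (R : ℝ) :
    cubeEnergy d (fun x => c * a x) R = c * cubeEnergy d a R := by
  simp only [cubeEnergy, integral_const_mul]

lemma cubeEnergy_mono {b : (Fin d → ℝ) → ℝ} (ha : Integrable a) (hb : Integrable b) (hab : a ≤ b)
    (R : ℝ) : cubeEnergy d a R ≤ cubeEnergy d b R :=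
  setIntegral_mono (integrableOn_setIntegral_sub ha _ (isCompact_cube d R).measure_ne_top)
    (integrableOn_setIntegral_sub hb _ (isCompact_cube d R).measure_ne_top) fun x =>
    setIntegral_mono (ha.comp_sub_left x).integrableOn (hb.comp_sub_left x).integrableOn
      fun y => hab (x - y)

lemma setIntegral_cube_le_setIntegral_sub (ha : Integrable a) (ha_nonneg : 0 ≤ a) {R₀ R : ℝ}
    {x : Fin d → ℝ} (hx : x ∈ cube d (R - R₀)) :
    ∫ u in cube d R₀, a u ≤ ∫ y in cube d R, a (x - y) := by
  rw [← (Measure.measurePreserving_sub_left volume x).setIntegral_preimage_emb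
    (MeasurableEquiv.subLeft x).measurableEmbedding a (cube d R₀)]
  refine setIntegral_mono_set (ha.comp_sub_left x).integrableOn
    (ae_of_all _ fun y => ha_nonneg (x - y)) (Eventually.of_forall fun y (hy : x - y ∈ _) => ?_)
  exact (by simpa using sub_mem_cube hx hy : y ∈ cube d R)

lemma setIntegral_cube_mul_le_cubeEnergy (ha : Integrable a) (ha_nonneg : 0 ≤ a) {R₀ R : ℝ}
    (hR₀ : 0 ≤ R₀) (hR : R₀ ≤ R) :
    (∫ u in cube d R₀, a u) * (2 * (R - R₀)) ^ d ≤ cubeEnergy d a R := by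
  have hF (R' : ℝ) := integrableOn_setIntegral_sub ha (cube d R) (isCompact_cube d R').measure_ne_top
  calc (∫ u in cube d R₀, a u) * (2 * (R - R₀)) ^ d
      = (∫ u in cube d R₀, a u) * volume.real (cube d (R - R₀)) := by
        rw [volume_real_cube d (sub_nonneg.2 hR)]
    _ ≤ ∫ x in cube d (R - R₀), ∫ y in cube d R, a (x - y) :=
      setIntegral_ge_of_const_le_real (measurableSet_cube d _) (isCompact_cube d _).measure_ne_top
        (fun x hx => setIntegral_cube_le_setIntegral_sub ha ha_nonneg hx) (hF _)
    _ ≤ cubeEnergy d a R :=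
      setIntegral_mono_set (hF R) (ae_of_all _ fun x => integral_nonneg fun y => ha_nonneg (x - y))
        (cube_mono d (by linarith)).eventuallyLE

lemma tendsto_setIntegral_cube (ha : Integrable a) :
    Tendsto (fun R => ∫ x in cube d R, a x) atTop (𝓝 (∫ x, a x)) :=
  AECover.integral_tendsto_of_countably_generated
    ⟨ae_of_all _ fun x => (eventually_ge_atTop ‖x‖).mono fun _ => mem_cube_of_norm_le,
      measurableSet_cube d⟩ ha

theorem tendsto_cubeEnergy_div (ha : Integrable a) (ha_nonneg : 0 ≤ a) :
    Tendsto (fun R => cubeEnergy d a R / (2 * R) ^ d) atTop (𝓝 (∫ x, a x)) := by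
  refine tendsto_order.2 ⟨fun c hc => ?_, fun c hc => ?_⟩
  · obtain ⟨R₀, hc₀, hR₀⟩ := (((tendsto_setIntegral_cube ha).eventually (eventually_gt_nhds hc)).and
      (eventually_ge_atTop 0)).exists
    have hlow : Tendsto (fun R => (∫ u in cube d R₀, a u) * (1 - R₀ / R) ^ d) atTop
        (𝓝 (∫ u in cube d R₀, a u)) := by
      have h0 : Tendsto (fun R : ℝ => R₀ / R) atTop (𝓝 0) :=
        tendsto_const_nhds.div_atTop tendsto_id
      simpa using (tendsto_const_nhds (x := ∫ u in cube d R₀, a u)).mul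
        (((tendsto_const_nhds (x := (1 : ℝ))).sub h0).pow d)
    filter_upwards [hlow.eventually (eventually_gt_nhds hc₀), eventually_gt_atTop R₀]
      with R hc' hR
    have hR0 : 0 < R := hR₀.trans_lt hR
    refine hc'.trans_le ?_
    rw [le_div_iff₀ (by positivity)]
    refine (le_of_eq ?_).trans (setIntegral_cube_mul_le_cubeEnergy ha ha_nonneg hR₀ hR.le)
    rw [mul_assoc, ← mul_pow, one_sub_div hR0.ne']
    congr 2
    field_simp
  · filter_upwards [eventually_gt_atTop 0] with R hR
    refine lt_of_le_of_lt ?_ hc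
    rw [div_le_iff₀ (by positivity)]
    simpa [Real.norm_of_nonneg (ha_nonneg _)] using cubeEnergy_le_integral_norm_mul ha hR.le

end

lemma tendsto_one_sub_exp_neg_mul_div_atTop {c : ℝ} (hc : 0 ≤ c) :
    Tendsto (fun v => (1 - exp (-(c * v))) / v) atTop (𝓝 0) := by
  refine tendsto_of_tendsto_of_tendsto_of_le_of_le' tendsto_const_nhds tendsto_inv_atTop_zero
    ?_ ?_
  all_goals filter_upwards [eventually_gt_atTop 0] with v hv
  · have : exp (-(c * v)) ≤ 1 := exp_le_one_iff.2 (by nlinarith)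
    exact div_nonneg (by linarith) hv.le
  · rw [div_le_iff₀ hv, inv_mul_cancel₀ hv.ne']
    linarith [exp_pos (-(c * v))]

lemma le_of_forall_pos_le_add_mul {x y c : ℝ} (h : ∀ t > 0, x ≤ y + c * t) : x ≤ y := by
  have hlim : Tendsto (fun t => y + c * t) (𝓝[>] 0) (𝓝 y) := by
    have : Continuous fun t : ℝ => y + c * t := by fun_prop
    simpa using (this.tendsto 0).mono_left nhdsWithin_le_nhds
  exact ge_of_tendsto hlim (eventually_mem_nhdsWithin.mono h)

theorem stmt17_general (d : ℕ) (hd : 1 ≤ d)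
    (aminus aplus : (Fin d → ℝ) → ℝ)
    (ham_nonneg : ∀ x, 0 ≤ aminus x)
    (ham_int : Integrable aminus) (ham_norm : ∫ x, aminus x = 1)
    (hap_int : Integrable aplus)
    (κm κp C m : ℝ) (hκp : 0 < κp) (hC : 0 < C)
    (b : ℝ)
    (z : ℝ) (hza : ∀ x, z * aminus x ≤ aplus x)
    (hacc : ∀ t : ℝ, 0 < t → ∀ R : ℝ, 0 < R →
      κp * cubeEnergy d aplus R - κm * C * t * cubeEnergy d aminus R
          - m * (2 * R) ^ d
          - (b / (C * t)) * (1 - Real.exp (-(C * t * (2 * R) ^ d))) ≤ 0) :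
    z * κp ≤ m := by
  have hE : Tendsto (fun R => cubeEnergy d aminus R / (2 * R) ^ d) atTop (𝓝 1) :=
    ham_norm ▸ tendsto_cubeEnergy_div ham_int ham_nonneg
  have hvol : Tendsto (fun R : ℝ => (2 * R) ^ d) atTop atTop :=
    (tendsto_pow_atTop (by omega)).comp (tendsto_id.const_mul_atTop two_pos)
  refine le_of_forall_pos_le_add_mul (c := κm * C) fun t ht => ?_
  have hlim : Tendsto (fun R => (z * κp - κm * C * t) * (cubeEnergy d aminus R / (2 * R) ^ d)
      - m - b / (C * t) * ((1 - exp (-(C * t * (2 * R) ^ d))) / (2 * R) ^ d)) atTop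
      (𝓝 (z * κp - κm * C * t - m)) := by
    simpa using ((hE.const_mul _).sub_const m).sub
      (((tendsto_one_sub_exp_neg_mul_div_atTop (by positivity)).comp hvol).const_mul _)
  suffices z * κp - κm * C * t - m ≤ 0 by linarith
  refine le_of_tendsto hlim ?_
  filter_upwards [eventually_gt_atTop 0] with R hR
  have hzE : κp * (z * cubeEnergy d aminus R) ≤ κp * cubeEnergy d aplus R := by
    rw [← cubeEnergy_const_mul]
    exact mul_le_mul_of_nonneg_left (cubeEnergy_mono (ham_int.const_mul z) hap_int hza R) hκp.le
  calc _ = (κp * (z * cubeEnergy d aminus R) - κm * C * t * cubeEnergy d aminus R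
          - m * (2 * R) ^ d - b / (C * t) * (1 - exp (-(C * t * (2 * R) ^ d)))) / (2 * R) ^ d := by
        field_simp
    _ ≤ 0 := div_nonpos_of_nonpos_of_nonneg (by linarith [hacc t ht R hR]) (by positivity)

/-- Section 7: if `a⁺ ≥ z a⁻` and the accretivity inequality
`κ⁺A_R⁺ - κ⁻CtA_R⁻ - m|Λ_R| - (b/(Ct))(1 - e^{-Ct|Λ_R|}) ≤ 0`
holds for all `t > 0` and all `R > 0`, then `m ≥ zκ⁺`: the mortality `m` cannot be
arbitrarily small. -/
theorem stmt17 (d : ℕ) (hd : 1 ≤ d)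
    (aminus aplus : (Fin d → ℝ) → ℝ)
    (ham_nonneg : ∀ x, 0 ≤ aminus x) (ham_meas : Measurable aminus)
    (ham_int : Integrable aminus) (ham_norm : ∫ x, aminus x = 1)
    (hap_nonneg : ∀ x, 0 ≤ aplus x) (hap_meas : Measurable aplus)
    (hap_int : Integrable aplus)
    (κm κp C m : ℝ) (hκm : 0 < κm) (hκp : 0 < κp) (hC : 0 < C) (hm : 0 < m)
    (b : ℝ) (hb : 0 ≤ b)
    (z : ℝ) (hz : 0 < z) (hza : ∀ x, z * aminus x ≤ aplus x)
    (hacc : ∀ t : ℝ, 0 < t → ∀ R : ℝ, 0 < R →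
      κp * cubeEnergy d aplus R - κm * C * t * cubeEnergy d aminus R
          - m * (2 * R) ^ d
          - (b / (C * t)) * (1 - Real.exp (-(C * t * (2 * R) ^ d))) ≤ 0) :
    z * κp ≤ m :=
  stmt17_general d hd aminus aplus ham_nonneg ham_int ham_norm hap_int κm κp C m hκp hC b z hza hacc
end
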